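/- arXiv:math-ph/0201008 — 2 statements merged into one kernel-verified Lean document; each statement's English description precedes it below -/
import Mathlib

section
/- Let χ > 0 and ω > 0. There exists a constant β > 0 (depending only on χ and ω) with the following property: whenever A¹, A² : ℤ → ℂ and α₁, α₂ > 0 satisfy |Aˡ(m)| ≤ αₗ·e^{−χ|m|}/⟨m⟩² for all m ∈ ℤ and l = 1, 2, and one defines Ã(m) = A²(m)/(i·m·ω) for m ≠ 0 and Ã(0) = −(1/(iω))·Σ_{k∈ℤ, k≠0} A²(k)/k, then for all m ∈ ℤ the convolution R(m) = Σ_{n∈ℤ} A¹(m−n)·Ã(n) converges absolutely and satisfies |R(m)| ≤ β·α₁·α₂·e^{−χ|m|}/⟨m⟩². -/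
/-!
Write `w(n) = e^{-χ|n|} / ⟨n⟩²`. Dividing by `i n ω` only improves the decay of `A²`, and the
renormalised zeroth coefficient is bounded by `α₂ ∑ w / ω`, so `|Ã| ≲ α₂ w`. The weight is then
submultiplicative up to a summable factor: from `|m| ≤ |m - n| + |n|` the exponentials satisfy
`e^{-χ|m-n|} e^{-χ|n|} ≤ e^{-χ|m|}`, and `⟨m⟩² ≤ 2 (⟨m-n⟩² + ⟨n⟩²)` gives
`⟨m-n⟩⁻² ⟨n⟩⁻² ≤ 2 ⟨m⟩⁻² (⟨m-n⟩⁻² + ⟨n⟩⁻²)`. Summing over `n` bounds the convolution by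
`4 (∑ ⟨n⟩⁻²) w(m)`.
-/

noncomputable section

/-- `⟨m⟩ = |m|` for `m ≠ 0` and `⟨0⟩ = 1`. -/
def jnorm (m : ℤ) : ℝ := if m = 0 then 1 else |(m : ℝ)|

lemma one_le_jnorm (m : ℤ) : 1 ≤ jnorm m := by
  unfold jnorm
  split_ifs with h
  · exact le_rfl
  · rw [← Int.cast_abs]
    exact_mod_cast Int.one_le_abs h

lemma jnorm_pos (m : ℤ) : 0 < jnorm m := one_pos.trans_le (one_le_jnorm m)

lemma abs_le_jnorm (m : ℤ) : |(m : ℝ)| ≤ jnorm m := by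
  unfold jnorm
  split_ifs with h
  · simp [h]
  · exact le_rfl

lemma jnorm_le_jnorm_sub_add_jnorm (m n : ℤ) : jnorm m ≤ jnorm (m - n) + jnorm n := by
  by_cases hm : m = 0
  · rw [hm, show jnorm 0 = 1 by simp [jnorm]]
    linarith [one_le_jnorm (0 - n), one_le_jnorm n]
  · calc jnorm m = |((m - n : ℤ) : ℝ) + n| := by simp [jnorm, hm]
      _ ≤ |((m - n : ℤ) : ℝ)| + |(n : ℝ)| := abs_add_le _ _
      _ ≤ jnorm (m - n) + jnorm n := add_le_add (abs_le_jnorm _) (abs_le_jnorm _)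

lemma summable_inv_jnorm_sq : Summable fun n : ℤ => (jnorm n ^ 2)⁻¹ :=
  ((Real.summable_one_div_int_pow (p := 2)).2 one_lt_two).congr_cofinite <|
    (Set.finite_singleton 0).eventually_cofinite_notMem.mono fun n hn => by
      simp_all [jnorm, sq_abs]

lemma hasSum_inv_jnorm_sq_sub_add (m : ℤ) :
    HasSum (fun n : ℤ => (jnorm (m - n) ^ 2)⁻¹ + (jnorm n ^ 2)⁻¹)
      (2 * ∑' n : ℤ, (jnorm n ^ 2)⁻¹) := by
  have h := summable_inv_jnorm_sq.hasSum
  rw [two_mul]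
  exact ((Equiv.subLeft m).hasSum_iff.mpr h).add h

lemma inv_sq_mul_inv_sq_le {a b c : ℝ} (ha : a ≠ 0) (hb : b ≠ 0) (hc : 0 < c) (h : c ≤ a + b) :
    (a ^ 2)⁻¹ * (b ^ 2)⁻¹ ≤ 2 / c ^ 2 * ((a ^ 2)⁻¹ + (b ^ 2)⁻¹) := by
  have hsq : c ^ 2 ≤ 2 * (a ^ 2 + b ^ 2) := by nlinarith [sq_nonneg (a - b)]
  rw [div_mul_eq_mul_div, le_div_iff₀ (by positivity)]
  calc (a ^ 2)⁻¹ * (b ^ 2)⁻¹ * c ^ 2 ≤ (a ^ 2)⁻¹ * (b ^ 2)⁻¹ * (2 * (a ^ 2 + b ^ 2)) := by gcongr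
    _ = 2 * ((a ^ 2)⁻¹ + (b ^ 2)⁻¹) := by field_simp; ring

def decayWeight (χ : ℝ) (n : ℤ) : ℝ := Real.exp (-χ * |(n : ℝ)|) / jnorm n ^ 2

section decayWeight

variable {χ : ℝ}

lemma decayWeight_nonneg (χ : ℝ) (n : ℤ) : 0 ≤ decayWeight χ n := by
  have := jnorm_pos n
  unfold decayWeight
  positivity

@[simp]
lemma decayWeight_zero (χ : ℝ) : decayWeight χ 0 = 1 := by simp [decayWeight, jnorm]

lemma decayWeight_le_inv_jnorm_sq (hχ : 0 ≤ χ) (n : ℤ) : decayWeight χ n ≤ (jnorm n ^ 2)⁻¹ := by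
  have hexp : Real.exp (-χ * |(n : ℝ)|) ≤ 1 :=
    Real.exp_le_one_iff.mpr (by nlinarith [abs_nonneg (n : ℝ)])
  rw [decayWeight, div_eq_mul_inv]
  exact mul_le_of_le_one_left (by have := jnorm_pos n; positivity) hexp

lemma summable_decayWeight (hχ : 0 ≤ χ) : Summable (decayWeight χ) :=
  summable_inv_jnorm_sq.of_nonneg_of_le (decayWeight_nonneg χ) (decayWeight_le_inv_jnorm_sq hχ)

lemma one_le_tsum_decayWeight (hχ : 0 ≤ χ) : 1 ≤ ∑' n, decayWeight χ n :=
  decayWeight_zero χ ▸ (summable_decayWeight hχ).le_tsum 0 fun n _ => decayWeight_nonneg χ n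

lemma decayWeight_sub_mul_le (hχ : 0 ≤ χ) (m n : ℤ) :
    decayWeight χ (m - n) * decayWeight χ n ≤
      2 * decayWeight χ m * ((jnorm (m - n) ^ 2)⁻¹ + (jnorm n ^ 2)⁻¹) := by
  have hexp : Real.exp (-χ * |((m - n : ℤ) : ℝ)|) * Real.exp (-χ * |(n : ℝ)|) ≤
      Real.exp (-χ * |(m : ℝ)|) := by
    have : |(m : ℝ)| ≤ |((m - n : ℤ) : ℝ)| + |(n : ℝ)| := by
      simpa using abs_add_le ((m - n : ℤ) : ℝ) n
    rw [← Real.exp_add, Real.exp_le_exp]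
    nlinarith
  have hjnorm := inv_sq_mul_inv_sq_le (jnorm_pos (m - n)).ne' (jnorm_pos n).ne' (jnorm_pos m)
    (jnorm_le_jnorm_sub_add_jnorm m n)
  calc decayWeight χ (m - n) * decayWeight χ n
      = (Real.exp (-χ * |((m - n : ℤ) : ℝ)|) * Real.exp (-χ * |(n : ℝ)|)) *
          ((jnorm (m - n) ^ 2)⁻¹ * (jnorm n ^ 2)⁻¹) := by
        simp only [decayWeight, div_eq_mul_inv]; ring
    _ ≤ Real.exp (-χ * |(m : ℝ)|) * (2 / jnorm m ^ 2 *
          ((jnorm (m - n) ^ 2)⁻¹ + (jnorm n ^ 2)⁻¹)) := by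
        gcongr
    _ = 2 * decayWeight χ m * ((jnorm (m - n) ^ 2)⁻¹ + (jnorm n ^ 2)⁻¹) := by
        simp only [decayWeight]; ring

lemma nonneg_of_norm_le_mul_decayWeight {E : Type*} [SeminormedAddCommGroup E] {f : ℤ → E}
    {a : ℝ} (hf : ∀ n, ‖f n‖ ≤ a * decayWeight χ n) : 0 ≤ a := by
  simpa using (norm_nonneg _).trans (hf 0)

variable {R : Type*} [SeminormedRing R] {f g : ℤ → R} {a b : ℝ}

lemma norm_mul_sub_le_of_le_decayWeight (hχ : 0 ≤ χ) (hf : ∀ n, ‖f n‖ ≤ a * decayWeight χ n)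
    (hg : ∀ n, ‖g n‖ ≤ b * decayWeight χ n) (m n : ℤ) :
    ‖f (m - n) * g n‖ ≤
      2 * a * b * decayWeight χ m * ((jnorm (m - n) ^ 2)⁻¹ + (jnorm n ^ 2)⁻¹) := by
  have ha := nonneg_of_norm_le_mul_decayWeight hf
  have hb := nonneg_of_norm_le_mul_decayWeight hg
  calc ‖f (m - n) * g n‖ ≤ ‖f (m - n)‖ * ‖g n‖ := norm_mul_le _ _
    _ ≤ (a * decayWeight χ (m - n)) * (b * decayWeight χ n) :=
        mul_le_mul (hf _) (hg n) (norm_nonneg _) (mul_nonneg ha (decayWeight_nonneg χ _))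
    _ = a * b * (decayWeight χ (m - n) * decayWeight χ n) := by ring
    _ ≤ a * b * (2 * decayWeight χ m * ((jnorm (m - n) ^ 2)⁻¹ + (jnorm n ^ 2)⁻¹)) :=
        mul_le_mul_of_nonneg_left (decayWeight_sub_mul_le hχ m n) (mul_nonneg ha hb)
    _ = _ := by ring

theorem summable_norm_conv_and_norm_tsum_conv_le (hχ : 0 ≤ χ)
    (hf : ∀ n, ‖f n‖ ≤ a * decayWeight χ n) (hg : ∀ n, ‖g n‖ ≤ b * decayWeight χ n) (m : ℤ) :
    Summable (fun n => ‖f (m - n) * g n‖) ∧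
      ‖∑' n, f (m - n) * g n‖ ≤ 4 * (∑' n, (jnorm n ^ 2)⁻¹) * a * b * decayWeight χ m := by
  have hmajorant := (hasSum_inv_jnorm_sq_sub_add m).mul_left (2 * a * b * decayWeight χ m)
  have hle := norm_mul_sub_le_of_le_decayWeight hχ hf hg m
  exact ⟨hmajorant.summable.of_nonneg_of_le (fun _ => norm_nonneg _) hle,
    (tsum_of_norm_bounded hmajorant hle).trans_eq (by ring)⟩

end decayWeight

section renormalisedPrimitive

open Complex

lemma norm_div_intCast_le (z : ℂ) (k : ℤ) : ‖z / k‖ ≤ ‖z‖ := by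
  rcases eq_or_ne k 0 with rfl | hk
  · simp
  · rw [norm_div, Complex.norm_intCast, ← Int.cast_abs]
    exact div_le_self (norm_nonneg z) (by exact_mod_cast Int.one_le_abs hk)

lemma norm_div_I_mul_intCast_mul_ofReal_le (z : ℂ) (n : ℤ) (ω : ℝ) :
    ‖z / (I * n * ω)‖ ≤ ‖z‖ / |ω| := by
  rw [mul_comm I, mul_assoc, ← div_div, norm_div, norm_mul, norm_I, one_mul, norm_real,
    Real.norm_eq_abs]
  gcongr
  exact norm_div_intCast_le z n

lemma norm_renormalisedPrimitiveCoeff_le {χ ω α : ℝ} (hχ : 0 ≤ χ) {A Atil : ℤ → ℂ}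
    (hA : ∀ n, ‖A n‖ ≤ α * decayWeight χ n)
    (hAtil : ∀ n : ℤ, n ≠ 0 → Atil n = A n / (I * n * ω))
    (hAtil0 : Atil 0 = -(1 / (I * ω)) * ∑' k : ℤ, if k = 0 then 0 else A k / k) (n : ℤ) :
    ‖Atil n‖ ≤ α * (∑' k, decayWeight χ k) / |ω| * decayWeight χ n := by
  have hα := nonneg_of_norm_le_mul_decayWeight hA
  have hT := one_le_tsum_decayWeight hχ
  rcases eq_or_ne n 0 with rfl | hn
  · have hsum : ‖∑' k : ℤ, if k = 0 then 0 else A k / k‖ ≤ α * ∑' k, decayWeight χ k := by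
      refine tsum_of_norm_bounded ((summable_decayWeight hχ).hasSum.mul_left α) fun k => ?_
      split_ifs
      · simpa using mul_nonneg hα (decayWeight_nonneg χ k)
      · exact (norm_div_intCast_le _ _).trans (hA k)
    rw [hAtil0, decayWeight_zero, mul_one, norm_mul, norm_neg, one_div, norm_inv, norm_mul, norm_I,
      one_mul, norm_real, Real.norm_eq_abs, inv_mul_eq_div]
    gcongr
  · calc ‖Atil n‖ ≤ ‖A n‖ / |ω| := hAtil n hn ▸ norm_div_I_mul_intCast_mul_ofReal_le _ _ _
      _ ≤ α * 1 * decayWeight χ n / |ω| := by rw [mul_one]; gcongr; exact hA n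
      _ ≤ α * (∑' k, decayWeight χ k) * decayWeight χ n / |ω| := by
        gcongr
        exact decayWeight_nonneg χ n
      _ = _ := by ring

end renormalisedPrimitive

theorem renormalised_primitive_coefficient_bound
    (χ ω : ℝ) (hχ : 0 < χ) (hω : 0 < ω) :
    ∃ β : ℝ, 0 < β ∧
      ∀ (A₁ A₂ : ℤ → ℂ) (α₁ α₂ : ℝ), 0 < α₁ → 0 < α₂ →
        (∀ m : ℤ, ‖A₁ m‖ ≤ α₁ * Real.exp (-χ * |(m : ℝ)|) / jnorm m ^ 2) →
        (∀ m : ℤ, ‖A₂ m‖ ≤ α₂ * Real.exp (-χ * |(m : ℝ)|) / jnorm m ^ 2) →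
        ∀ Atil : ℤ → ℂ,
          (∀ m : ℤ, m ≠ 0 → Atil m = A₂ m / (Complex.I * (m : ℂ) * (ω : ℂ))) →
          (Atil 0 = -(1 / (Complex.I * (ω : ℂ))) *
            ∑' k : ℤ, if k = 0 then (0 : ℂ) else A₂ k / (k : ℂ)) →
          ∀ m : ℤ,
            Summable (fun n : ℤ => ‖A₁ (m - n) * Atil n‖) ∧
            ‖∑' n : ℤ, A₁ (m - n) * Atil n‖
              ≤ β * α₁ * α₂ * Real.exp (-χ * |(m : ℝ)|) / jnorm m ^ 2 := by
  have hS : 0 < ∑' n : ℤ, (jnorm n ^ 2)⁻¹ :=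
    summable_inv_jnorm_sq.tsum_pos (fun n => by have := jnorm_pos n; positivity) 0 (by simp [jnorm])
  have hT := one_le_tsum_decayWeight hχ.le
  refine ⟨4 * (∑' n : ℤ, (jnorm n ^ 2)⁻¹) * (∑' n, decayWeight χ n) / ω, by positivity, ?_⟩
  intro A₁ A₂ α₁ α₂ _ _ hA₁ hA₂ Atil hAtil hAtil0 m
  have hw {A : ℤ → ℂ} {α : ℝ} (hA : ∀ m : ℤ, ‖A m‖ ≤ α * Real.exp (-χ * |(m : ℝ)|) / jnorm m ^ 2)
      (m : ℤ) : ‖A m‖ ≤ α * decayWeight χ m := (hA m).trans_eq (mul_div_assoc _ _ _)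
  obtain ⟨hsum, hle⟩ := summable_norm_conv_and_norm_tsum_conv_le hχ.le (hw hA₁)
    (norm_renormalisedPrimitiveCoeff_le hχ.le (hw hA₂) hAtil hAtil0) m
  refine ⟨hsum, hle.trans_eq ?_⟩
  rw [abs_of_pos hω, decayWeight]
  ring
end
end

section
/- Let Γ > 0 and let K : ℕ → ℝ satisfy 0 < K(1) = K(2) = K(3) = K(4), K(4) ≤ K(5), and for every n ≥ 5, K(n) = Γ·[ Σ_{p=1}^{n−1} K(p)·K(n−p) + Σ_{p=2}^{n−1} K(p)·K(n+1−p) + Σ_{p=3}^{n−1} K(p)·K(n+2−p) + Σ_{p=4}^{n−1} K(p)·K(n+3−p) ]. Then there exist constants M₀ > 0 and M₁ > 0 such that K(n) ≤ M₀·M₁ⁿ for all n ≥ 1. -/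
/-! One shows by strong induction that `K n ≤ M R ^ n / n ^ 2` for `n ≥ 4`, with `M = (64 Γ R³)⁻¹`
and `R` large, as for Catalan numbers. The weight `n⁻²` is what lets the induction close: the
convolution bound `∑_{p + q = m} p⁻² q⁻² ≤ 8 / m²` makes the quadratic terms cost only a constant
factor, while the index excess `p + q ≤ n + 3` costs the factor `R³` that the choice of `M` absorbs.
Products with a factor `K 1 = K 2 = K 3` are linear in the induction hypothesis and are absorbed by
taking `R ≥ 192 Γ K 1`. -/

open Finset

def shiftedConv (K : ℕ → ℝ) (n k : ℕ) : ℝ :=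
  ∑ p ∈ Ico (k + 1) n, K p * K (n + k - p)

lemma sum_Ico_one_inv_sq_le_two (N : ℕ) : ∑ p ∈ Ico 1 N, ((p : ℝ) ^ 2)⁻¹ ≤ 2 := by
  simpa [← Ico_add_one_left_eq_Ioo] using sum_Ioo_inv_sq_le (α := ℝ) 0 N

lemma sum_Ico_one_inv_sq_mul_inv_sq_le (m : ℕ) :
    ∑ p ∈ Ico 1 m, ((p : ℝ) ^ 2)⁻¹ * (((m - p : ℕ) : ℝ) ^ 2)⁻¹ ≤ 8 / (m : ℝ) ^ 2 := by
  -- `m² ≤ 2 (p² + q²)` for `p + q = m` splits each term into two `p⁻²`-sums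
  have hterm : ∀ p ∈ Ico 1 m, ((p : ℝ) ^ 2)⁻¹ * (((m - p : ℕ) : ℝ) ^ 2)⁻¹ ≤
      2 / (m : ℝ) ^ 2 * (((p : ℝ) ^ 2)⁻¹ + (((m - p : ℕ) : ℝ) ^ 2)⁻¹) := by
    intro p hp
    obtain ⟨hp1, hpm⟩ := mem_Ico.mp hp
    have hx : (0 : ℝ) < p := by exact_mod_cast hp1
    have hy : (0 : ℝ) < (m - p : ℕ) := by exact_mod_cast Nat.sub_pos_of_lt hpm
    have hxy : (p : ℝ) + (m - p : ℕ) = m := by exact_mod_cast Nat.add_sub_of_le hpm.le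
    rw [← hxy]
    field_simp
    nlinarith [sq_nonneg ((p : ℝ) - (m - p : ℕ))]
  calc ∑ p ∈ Ico 1 m, ((p : ℝ) ^ 2)⁻¹ * (((m - p : ℕ) : ℝ) ^ 2)⁻¹
      ≤ ∑ p ∈ Ico 1 m, 2 / (m : ℝ) ^ 2 * (((p : ℝ) ^ 2)⁻¹ + (((m - p : ℕ) : ℝ) ^ 2)⁻¹) :=
        sum_le_sum hterm
    _ = 2 / (m : ℝ) ^ 2 * (2 * ∑ p ∈ Ico 1 m, ((p : ℝ) ^ 2)⁻¹) := by
        rw [← mul_sum, sum_add_distrib,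
          sum_Ico_reflect (fun q : ℕ ↦ ((q : ℝ) ^ 2)⁻¹) 1 (Nat.le_succ m)]
        simp only [Nat.add_sub_cancel_left, Nat.add_sub_cancel]
        ring
    _ ≤ 2 / (m : ℝ) ^ 2 * (2 * 2) := by gcongr; exact sum_Ico_one_inv_sq_le_two m
    _ = 8 / (m : ℝ) ^ 2 := by ring

lemma sum_le_mul_of_card_le {ι : Type*} {s : Finset ι} {f : ι → ℝ} {B : ℝ} {N : ℕ}
    (hs : #s ≤ N) (hB : 0 ≤ B) (hf : ∀ p ∈ s, f p ≤ B) : ∑ p ∈ s, f p ≤ N * B := by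
  refine (sum_le_card_nsmul s f B hf).trans ?_
  rw [nsmul_eq_mul]
  gcongr

section Majorant

variable {K : ℕ → ℝ} {c M R : ℝ} {n : ℕ}

lemma le_of_majorant_of_le_add_three (hM : 0 ≤ M) (hR : 1 ≤ R)
    (hbound : ∀ m, 4 ≤ m → m < n → K m ≤ M * R ^ m / (m : ℝ) ^ 2)
    {m : ℕ} (hm : 4 ≤ m) (hmn : m < n) (hnm : n ≤ m + 3) :
    K m ≤ 4 * M * R ^ (n - 1) / (n : ℝ) ^ 2 := by
  have hm0 : (0 : ℝ) < m := by exact_mod_cast (by omega : 0 < m)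
  have hn0 : (0 : ℝ) < n := by exact_mod_cast (by omega : 0 < n)
  have hn2m : (n : ℝ) ≤ 2 * m := by exact_mod_cast (by omega : n ≤ 2 * m)
  calc K m ≤ M * R ^ m / (m : ℝ) ^ 2 := hbound m hm hmn
    _ ≤ M * R ^ (n - 1) / (m : ℝ) ^ 2 := by gcongr; omega
    _ = 4 * M * R ^ (n - 1) / (2 * m : ℝ) ^ 2 := by field_simp; ring
    _ ≤ 4 * M * R ^ (n - 1) / (n : ℝ) ^ 2 := by gcongr

lemma mul_le_of_majorant (hnn : ∀ m, 1 ≤ m → 0 ≤ K m)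
    (hbound : ∀ m, 4 ≤ m → m < n → K m ≤ M * R ^ m / (m : ℝ) ^ 2)
    {p q : ℕ} (hp : 4 ≤ p) (hpn : p < n) (hq : 4 ≤ q) (hqn : q < n) :
    K p * K q ≤ M ^ 2 * R ^ (p + q) * (((p : ℝ) ^ 2)⁻¹ * ((q : ℝ) ^ 2)⁻¹) := by
  calc K p * K q ≤ (M * R ^ p / (p : ℝ) ^ 2) * (M * R ^ q / (q : ℝ) ^ 2) :=
        mul_le_mul (hbound p hp hpn) (hbound q hq hqn) (hnn q (by omega))
          ((hnn p (by omega)).trans (hbound p hp hpn))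
    _ = M ^ 2 * R ^ (p + q) * (((p : ℝ) ^ 2)⁻¹ * ((q : ℝ) ^ 2)⁻¹) := by ring

lemma sum_Ico_mul_le_of_majorant (hR : 1 ≤ R) (hnn : ∀ m, 1 ≤ m → 0 ≤ K m)
    (hbound : ∀ m, 4 ≤ m → m < n → K m ≤ M * R ^ m / (m : ℝ) ^ 2)
    (hn : 1 ≤ n) {k : ℕ} (hk : k ≤ 3) :
    ∑ p ∈ Ico 4 (n + k - 3), K p * K (n + k - p) ≤ 8 * M ^ 2 * R ^ (n + 3) / (n : ℝ) ^ 2 := by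
  have hweights : ∑ p ∈ Ico 4 (n + k - 3), ((p : ℝ) ^ 2)⁻¹ * (((n + k - p : ℕ) : ℝ) ^ 2)⁻¹ ≤
      8 / (n : ℝ) ^ 2 := by
    refine le_trans ?_ ((sum_Ico_one_inv_sq_mul_inv_sq_le (n + k)).trans ?_)
    · exact sum_le_sum_of_subset_of_nonneg (Ico_subset_Ico (by norm_num) (by omega))
        fun _ _ _ ↦ by positivity
    · gcongr; exact_mod_cast Nat.le_add_right n k
  calc ∑ p ∈ Ico 4 (n + k - 3), K p * K (n + k - p)
      ≤ ∑ p ∈ Ico 4 (n + k - 3),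
          M ^ 2 * R ^ (n + 3) * (((p : ℝ) ^ 2)⁻¹ * (((n + k - p : ℕ) : ℝ) ^ 2)⁻¹) := by
        refine sum_le_sum fun p hp ↦ ?_
        obtain ⟨hp4, hpn⟩ := mem_Ico.mp hp
        refine (mul_le_of_majorant hnn hbound hp4 (by omega) (by omega) (by omega)).trans ?_
        gcongr M ^ 2 * ?_ * _
        exact pow_le_pow_right₀ hR (by omega)
    _ ≤ M ^ 2 * R ^ (n + 3) * (8 / (n : ℝ) ^ 2) := by rw [← mul_sum]; gcongr
    _ = 8 * M ^ 2 * R ^ (n + 3) / (n : ℝ) ^ 2 := by ring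

lemma shiftedConv_le_of_majorant (hM : 0 ≤ M) (hR : 1 ≤ R) (hnn : ∀ m, 1 ≤ m → 0 ≤ K m)
    (hsmall : ∀ p, 1 ≤ p → p ≤ 3 → K p = c)
    (hbound : ∀ m, 4 ≤ m → m < n → K m ≤ M * R ^ m / (m : ℝ) ^ 2)
    (hn : 7 ≤ n) {k : ℕ} (hk : k ≤ 3) :
    shiftedConv K n k ≤ (24 * c * M * R ^ (n - 1) + 8 * M ^ 2 * R ^ (n + 3)) / (n : ℝ) ^ 2 := by
  have hc : 0 ≤ c := hsmall 1 le_rfl (by norm_num) ▸ hnn 1 le_rfl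
  -- a factor of index at most 3 equals `c`, and then the other one is within 3 of `n`
  have hleft : ∑ p ∈ Ico (k + 1) 4, K p * K (n + k - p) ≤
      3 * (c * (4 * M * R ^ (n - 1) / (n : ℝ) ^ 2)) := by
    refine sum_le_mul_of_card_le (N := 3) (by rw [Nat.card_Ico]; omega) (by positivity)
      fun p hp ↦ ?_
    obtain ⟨hkp, hp4⟩ := mem_Ico.mp hp
    rw [hsmall p (by omega) (by omega)]
    exact mul_le_mul_of_nonneg_left
      (le_of_majorant_of_le_add_three hM hR hbound (by omega) (by omega) (by omega)) hc
  have hright : ∑ p ∈ Ico (n + k - 3) n, K p * K (n + k - p) ≤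
      3 * (c * (4 * M * R ^ (n - 1) / (n : ℝ) ^ 2)) := by
    refine sum_le_mul_of_card_le (N := 3) (by rw [Nat.card_Ico]; omega) (by positivity)
      fun p hp ↦ ?_
    obtain ⟨hp3, hpn⟩ := mem_Ico.mp hp
    rw [hsmall (n + k - p) (by omega) (by omega), mul_comm]
    exact mul_le_mul_of_nonneg_left
      (le_of_majorant_of_le_add_three hM hR hbound (by omega) (by omega) (by omega)) hc
  have hmiddle := sum_Ico_mul_le_of_majorant hR hnn hbound (by omega) hk
  rw [shiftedConv, ← sum_Ico_consecutive _ (by omega : k + 1 ≤ 4) (by omega : 4 ≤ n),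
    ← sum_Ico_consecutive _ (by omega : 4 ≤ n + k - 3) (by omega : n + k - 3 ≤ n)]
  have : (24 * c * M * R ^ (n - 1) + 8 * M ^ 2 * R ^ (n + 3)) / (n : ℝ) ^ 2 =
      3 * (c * (4 * M * R ^ (n - 1) / (n : ℝ) ^ 2)) + 8 * M ^ 2 * R ^ (n + 3) / (n : ℝ) ^ 2 +
        3 * (c * (4 * M * R ^ (n - 1) / (n : ℝ) ^ 2)) := by ring
  linarith

end Majorant

lemma shiftedConv_nonneg {K : ℕ → ℝ} {n : ℕ} (hK : ∀ m, 1 ≤ m → m < n → 0 ≤ K m) (k : ℕ) :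
    0 ≤ shiftedConv K n k :=
  sum_nonneg fun p hp ↦ by
    obtain ⟨hkp, hpn⟩ := mem_Ico.mp hp
    exact mul_nonneg (hK p (by omega) hpn) (hK _ (by omega) (by omega))

section Recurrence

variable {Γ : ℝ} {K : ℕ → ℝ}

lemma nonneg_of_recurrence (hΓ : 0 ≤ Γ) (hbase : ∀ n, 1 ≤ n → n ≤ 4 → 0 ≤ K n)
    (hrec : ∀ n, 5 ≤ n → K n = Γ * ∑ k ∈ range 4, shiftedConv K n k) :
    ∀ n, 1 ≤ n → 0 ≤ K n := by
  intro n
  induction n using Nat.strong_induction_on with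
  | _ n ih =>
    intro hn
    rcases le_or_gt n 4 with hn4 | hn4
    · exact hbase n hn hn4
    · rw [hrec n hn4]
      exact mul_nonneg hΓ (sum_nonneg fun k _ ↦ shiftedConv_nonneg (fun m hm hmn ↦ ih m hmn hm) k)

lemma le_majorant_of_recurrence (hΓ : 0 < Γ) {c R : ℝ} (hR : 1 ≤ R) (hRc : 192 * Γ * c ≤ R)
    (hnn : ∀ m, 1 ≤ m → 0 ≤ K m) (hsmall : ∀ p, 1 ≤ p → p ≤ 3 → K p = c)
    (hbase : ∀ n ∈ Icc 4 6, 2304 * Γ * K n ≤ R)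
    (hrec : ∀ n, 5 ≤ n → K n = Γ * ∑ k ∈ range 4, shiftedConv K n k) :
    ∀ n, 4 ≤ n → K n ≤ (64 * Γ * R ^ 3)⁻¹ * R ^ n / (n : ℝ) ^ 2 := by
  set M := (64 * Γ * R ^ 3)⁻¹ with hMdef
  have hR0 : 0 < R := one_pos.trans_le hR
  have hM : 0 < M := by positivity
  intro n
  induction n using Nat.strong_induction_on with
  | _ n ih =>
    intro hn
    rcases le_or_gt n 6 with hn6 | hn7
    · have hn36 : (n : ℝ) ^ 2 ≤ 6 ^ 2 := by gcongr; exact_mod_cast hn6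
      calc K n ≤ R / (2304 * Γ) := by
            rw [le_div_iff₀ (by positivity)]; linarith [hbase n (mem_Icc.mpr ⟨hn, hn6⟩)]
        _ = M * R ^ 4 / 6 ^ 2 := by rw [hMdef]; field_simp; ring
        _ ≤ M * R ^ n / (n : ℝ) ^ 2 := by gcongr
    · have hconv k (hk : k ∈ range 4) := shiftedConv_le_of_majorant hM.le hR hnn hsmall
        (fun m hm hmn ↦ ih m hmn hm) hn7 (k := k) (by simp at hk; omega)
      have hlin : 96 * Γ * c * M * R ^ (n - 1) ≤ M * R ^ n / 2 := by
        rw [show R ^ n = R * R ^ (n - 1) by rw [← pow_succ']; congr 1; omega]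
        nlinarith [mul_pos hM (pow_pos hR0 (n - 1))]
      have hquad : 32 * Γ * M ^ 2 * R ^ (n + 3) = M * R ^ n / 2 := by
        rw [hMdef, pow_add]; field_simp; ring
      calc K n = Γ * ∑ k ∈ range 4, shiftedConv K n k := hrec n (by omega)
        _ ≤ Γ * ∑ k ∈ range 4,
              (24 * c * M * R ^ (n - 1) + 8 * M ^ 2 * R ^ (n + 3)) / (n : ℝ) ^ 2 := by
            gcongr with k hk; exact hconv k hk
        _ = (96 * Γ * c * M * R ^ (n - 1) + 32 * Γ * M ^ 2 * R ^ (n + 3)) / (n : ℝ) ^ 2 := by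
            simp only [sum_const, card_range, nsmul_eq_mul]; ring
        _ ≤ M * R ^ n / (n : ℝ) ^ 2 := by gcongr; linarith

lemma le_mul_pow_of_le_majorant {c M R : ℝ} (hM : 0 ≤ M) (hR : 1 ≤ R) (hc : 0 ≤ c)
    (hsmall : ∀ p, 1 ≤ p → p ≤ 3 → K p = c)
    (hbound : ∀ n, 4 ≤ n → K n ≤ M * R ^ n / (n : ℝ) ^ 2) :
    ∀ n, 1 ≤ n → K n ≤ (M + c) * R ^ n := by
  intro n hn
  have hRn : 1 ≤ R ^ n := one_le_pow₀ hR
  rcases le_or_gt n 3 with hn3 | hn4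
  · rw [hsmall n hn hn3]
    nlinarith
  · have hn1 : (1 : ℝ) ≤ (n : ℝ) ^ 2 := by exact_mod_cast Nat.one_le_pow _ _ (by omega)
    calc K n ≤ M * R ^ n / (n : ℝ) ^ 2 := hbound n hn4
      _ ≤ M * R ^ n := div_le_self (by positivity) hn1
      _ ≤ (M + c) * R ^ n := by gcongr; linarith

end Recurrence

theorem K_sequence_geometric_bound_general
    (Γ : ℝ) (hΓ : 0 < Γ)
    (K : ℕ → ℝ) (hKpos : 0 < K 1)
    (h12 : K 1 = K 2) (h23 : K 2 = K 3) (h34 : K 3 = K 4)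
    (hrec : ∀ n : ℕ, 5 ≤ n → K n =
      Γ * ((∑ p ∈ Finset.Ico 1 n, K p * K (n - p))
         + (∑ p ∈ Finset.Ico 2 n, K p * K (n + 1 - p))
         + (∑ p ∈ Finset.Ico 3 n, K p * K (n + 2 - p))
         + (∑ p ∈ Finset.Ico 4 n, K p * K (n + 3 - p)))) :
    ∃ M₀ M₁ : ℝ, 0 < M₀ ∧ 0 < M₁ ∧ ∀ n : ℕ, 1 ≤ n → K n ≤ M₀ * M₁ ^ n := by
  have hrec' : ∀ n, 5 ≤ n → K n = Γ * ∑ k ∈ range 4, shiftedConv K n k := fun n hn ↦ by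
    simp only [sum_range_succ, range_zero, sum_empty, shiftedConv, add_zero, zero_add]
    exact hrec n hn
  have hsmall : ∀ p, 1 ≤ p → p ≤ 4 → K p = K 1 := by
    intro p hp1 hp4
    interval_cases p <;> simp only [h12, h23, h34]
  have hsmall3 p (hp1 : 1 ≤ p) (hp3 : p ≤ 3) : K p = K 1 := hsmall p hp1 (by omega)
  have hnn := nonneg_of_recurrence hΓ.le (fun p hp1 hp4 ↦ hsmall p hp1 hp4 ▸ hKpos.le) hrec'
  set R := 1 + 2304 * Γ * ∑ m ∈ Icc 1 6, K m
  have hK_nonneg : ∀ i ∈ Icc 1 6, 0 ≤ K i := fun i hi ↦ hnn i (mem_Icc.mp hi).1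
  have hR_ge {m} (hm : m ∈ Icc 1 6) : 2304 * Γ * K m ≤ R := by
    nlinarith [single_le_sum hK_nonneg hm]
  have hR : 1 ≤ R := by nlinarith [sum_nonneg hK_nonneg]
  have hmain := le_majorant_of_recurrence hΓ hR (by nlinarith [hR_ge (m := 1) (by simp)]) hnn
    hsmall3 (fun n hn ↦ hR_ge (Icc_subset_Icc (by norm_num) le_rfl hn)) hrec'
  exact ⟨_, R, by positivity, by positivity,
    le_mul_pow_of_le_majorant (by positivity) hR hKpos.le hsmall3 hmain⟩

theorem K_sequence_geometric_bound
    (Γ : ℝ) (hΓ : 0 < Γ)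
    (K : ℕ → ℝ) (hKpos : 0 < K 1)
    (h12 : K 1 = K 2) (h23 : K 2 = K 3) (h34 : K 3 = K 4)
    (h45 : K 4 ≤ K 5)
    (hrec : ∀ n : ℕ, 5 ≤ n → K n =
      Γ * ((∑ p ∈ Finset.Ico 1 n, K p * K (n - p))
         + (∑ p ∈ Finset.Ico 2 n, K p * K (n + 1 - p))
         + (∑ p ∈ Finset.Ico 3 n, K p * K (n + 2 - p))
         + (∑ p ∈ Finset.Ico 4 n, K p * K (n + 3 - p)))) :
    ∃ M₀ M₁ : ℝ, 0 < M₀ ∧ 0 < M₁ ∧ ∀ n : ℕ, 1 ≤ n → K n ≤ M₀ * M₁ ^ n :=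
  K_sequence_geometric_bound_general Γ hΓ K hKpos h12 h23 h34 hrec
end
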